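/- Let t ≥ 2 be an integer, let H be a finite simple graph, let S ⊆ V(H) be a cycle cover of H, and let G = Cl(H, S, t) be a clique attachment of H along S. Then the t-clique-free complex CF_t(G) is shellable. -/

import Mathlib

/-- The `t`-clique-free complex of a graph `G`: faces are the finite vertex sets
containing no `t`-clique of `G`. -/
def cliqueFreeComplex {V : Type*} (G : SimpleGraph V) (t : ℕ) : Set (Finset V) :=
  {A : Finset V | ∀ B ⊆ A, ¬ G.IsNClique t B}

/-- The facets (maximal faces) of a simplicial complex. -/
def Facets {V : Type*} (Δ : Set (Finset V)) : Set (Finset V) :=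
  {F | F ∈ Δ ∧ ∀ A ∈ Δ, F ⊆ A → F = A}

/-- Shellability: the facets admit a linear order `F 0, …, F (s-1)` such that for all
`i < j` there are `v ∈ F j \ F i` and `l < j` with `F j \ F l = {v}`. -/
def IsShellable {V : Type*} [DecidableEq V] (Δ : Set (Finset V)) : Prop :=
  ∃ (s : ℕ) (F : Fin s → Finset V),
    (∀ i, F i ∈ Facets Δ) ∧ Function.Injective F ∧
    (∀ A ∈ Facets Δ, ∃ i, F i = A) ∧
    ∀ i j : Fin s, i < j →
      ∃ v ∈ F j \ F i, ∃ l, l < j ∧ F j \ F l = ({v} : Finset V)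

/-- The data of a clique attachment `G = Cl(H, S, t)`: `G` is a graph on the ambient
vertex type, `VH` is the vertex set of `H` (so that `H` is the induced subgraph of `G`
on `VH`; no new edges are added between vertices of `H`), `S ⊆ VH`, and for each
`v ∈ S`, `K v` is the vertex set of the clique attached at `v`: it contains `v`, has at
least `t` vertices, its other vertices are new and pairwise disjoint from the other
attached cliques, and each new vertex is adjacent exactly to the other vertices of
its clique. -/
structure IsCliqueAttachment {V : Type*} [DecidableEq V] (G : SimpleGraph V)
    (VH S : Finset V) (K : V → Finset V) (t : ℕ) : Prop where
  subset : S ⊆ VH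
  cover : ∀ w : V, w ∈ VH ∨ ∃ v ∈ S, w ∈ K v
  mem_self : ∀ v ∈ S, v ∈ K v
  card_ge : ∀ v ∈ S, t ≤ (K v).card
  new_vertices : ∀ v ∈ S, ∀ w ∈ K v, w ≠ v → w ∉ VH
  pairwise_disjoint : ∀ u ∈ S, ∀ v ∈ S, u ≠ v → Disjoint (K u) (K v)
  clique : ∀ v ∈ S, G.IsClique ↑(K v)
  adj_new : ∀ v ∈ S, ∀ w ∈ K v, w ∉ VH → ∀ u : V, G.Adj w u ↔ (u ∈ K v ∧ u ≠ w)

/-!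
A vertex `x` of a complex `Δ` is a shedding vertex when no facet of the deletion `Δ ∖ x` extends
by `x`. The facets of the deletion are then facets of `Δ`, and a shelling of the deletion
followed by the cone over a shelling of the link of `x` is a shelling of `Δ`. If `Δ` is a cone
with apex `x`, a shelling of the link is enough. Deletions and links of the complexes
`{A ⊆ P | A ∪ D contains no t-clique}` are again of this form, so `CF_t(G)` (where `P = V` and
`D = ∅`) is shelled by induction on `P`, removing one vertex at a time:

* a vertex `v ∈ S` is a shedding vertex while all of `K_v` is still in `P ∪ D`. The new vertices
  of `K_v` have no neighbours outside `K_v`, and this forces every facet of the deletion to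
  contain `t - 1` vertices of `K_v`;
* after that, a new vertex `w ∈ K_v` is a shedding vertex if at least `t` vertices of `K_v` remain
  in `P ∪ D`, and is a cone apex otherwise;
* the rest of `P` lies in the forest `H ∖ S`, which a `t`-clique meets in at most an edge. If
  some `z` completes a `t`-clique with `D` alone, then no face contains `z`, so `z` is trivially a
  shedding vertex. Otherwise the edges `xy` that complete a `t`-clique with `D` form a forest.
  For a leaf `x` of that forest with partner `y`, every facet avoiding `y` contains `x`, so `y`
  is a shedding vertex. When there are no such edges, every vertex is a cone apex.
-/

open Finset

theorem exists_mem_facets_superset {V : Type*} [Finite V] {Δ : Set (Finset V)} {A : Finset V}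
    (hA : A ∈ Δ) : ∃ F ∈ Facets Δ, A ⊆ F := by
  obtain ⟨F, hAF, hF⟩ := (Set.toFinite Δ).exists_le_maximal hA
  exact ⟨F, ⟨hF.prop, fun B hB hFB => le_antisymm hFB (hF.2 hB hFB)⟩, hAF⟩

section Shelling

variable {V : Type*} [DecidableEq V]

def deletion (Δ : Set (Finset V)) (x : V) : Set (Finset V) :=
  {A ∈ Δ | x ∉ A}

def link (Δ : Set (Finset V)) (x : V) : Set (Finset V) :=
  {A | x ∉ A ∧ insert x A ∈ Δ}

def IsSheddingVertex (Δ : Set (Finset V)) (x : V) : Prop :=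
  ∀ A ∈ Facets (deletion Δ x), insert x A ∉ Δ

def IsConeVertex (Δ : Set (Finset V)) (x : V) : Prop :=
  ∀ A ∈ Δ, insert x A ∈ Δ

def IsShellingOrder {s : ℕ} (F : Fin s → Finset V) : Prop :=
  ∀ i j : Fin s, i < j → ∃ v ∈ F j \ F i, ∃ l, l < j ∧ F j \ F l = ({v} : Finset V)

theorem IsShellable.of_subset_singleton_empty {Δ : Set (Finset V)} (hΔ : Δ ⊆ {∅}) :
    IsShellable Δ := by
  by_cases h : ∅ ∈ Δ
  · refine ⟨1, fun _ => ∅, fun _ => ⟨h, fun A hA _ => (hΔ hA).symm⟩,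
      fun i j _ => Subsingleton.elim i j, fun A hA => ⟨0, (hΔ hA.1).symm⟩, fun i j hij => ?_⟩
    exact absurd hij (Subsingleton.elim i j ▸ lt_irrefl i)
  · refine ⟨0, Fin.elim0, fun i => i.elim0, fun i => i.elim0, fun A hA => ?_, fun i => i.elim0⟩
    exact absurd (hΔ hA.1 ▸ hA.1) h

theorem insert_mem_facets_of_mem_facets_link {Δ : Set (Finset V)} {x : V} {F : Finset V}
    (hF : F ∈ Facets (link Δ x)) : insert x F ∈ Facets Δ := by
  obtain ⟨⟨hxF, hF⟩, hmax⟩ := hF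
  refine ⟨hF, fun A hA hFA => ?_⟩
  have hxA : x ∈ A := hFA (mem_insert_self x F)
  have hlink : A.erase x ∈ link Δ x := ⟨notMem_erase x A, by rwa [insert_erase hxA]⟩
  rw [hmax _ hlink (subset_erase.2 ⟨(subset_insert x F).trans hFA, hxF⟩), insert_erase hxA]

theorem erase_mem_facets_link {Δ : Set (Finset V)} {x : V} {A : Finset V}
    (hA : A ∈ Facets Δ) (hxA : x ∈ A) : A.erase x ∈ Facets (link Δ x) := by
  refine ⟨⟨notMem_erase x A, by rw [insert_erase hxA]; exact hA.1⟩, fun B hB hAB => ?_⟩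
  have : A ⊆ insert x B := by
    rw [← insert_erase hxA]
    exact insert_subset_insert x hAB
  rw [hA.2 _ hB.2 this, erase_insert hB.1]

theorem IsShellingOrder.cone {s : ℕ} {F : Fin s → Finset V} {x : V} (hF : IsShellingOrder F)
    (hxF : ∀ i, x ∉ F i) : IsShellingOrder fun i => insert x (F i) := by
  intro i j hij
  obtain ⟨v, hv, l, hlj, hl⟩ := hF i j hij
  have hvx : v ≠ x := fun h => hxF j (h ▸ (mem_sdiff.1 hv).1)
  refine ⟨v, ?_, l, hlj, ?_⟩
  · rw [insert_sdiff_insert, mem_sdiff, mem_insert, not_or]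
    exact ⟨(mem_sdiff.1 hv).1, hvx, (mem_sdiff.1 hv).2⟩
  · rw [insert_sdiff_insert, sdiff_insert, hl, erase_eq_of_notMem (by simpa using hvx.symm)]

theorem insert_injective_of_notMem {s : ℕ} {F : Fin s → Finset V} {x : V}
    (hF : Function.Injective F) (hxF : ∀ i, x ∉ F i) :
    Function.Injective fun i => insert x (F i) := fun i j h =>
  hF (by simpa only [erase_insert (hxF _)] using congrArg (Finset.erase · x) h)

theorem IsShellable.of_isConeVertex {Δ : Set (Finset V)} {x : V} (hx : IsConeVertex Δ x)
    (hlink : IsShellable (link Δ x)) : IsShellable Δ := by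
  obtain ⟨n, L, hL, hLinj, hLsurj, hLshell⟩ := hlink
  have hxL : ∀ j, x ∉ L j := fun j => (hL j).1.1
  refine ⟨n, fun j => insert x (L j), fun j => insert_mem_facets_of_mem_facets_link (hL j),
    insert_injective_of_notMem hLinj hxL, fun A hA => ?_, IsShellingOrder.cone hLshell hxL⟩
  have hxA : x ∈ A := hA.2 _ (hx A hA.1) (subset_insert x A) ▸ mem_insert_self x A
  obtain ⟨j, hj⟩ := hLsurj _ (erase_mem_facets_link hA hxA)
  exact ⟨j, by simp only [hj, insert_erase hxA]⟩

theorem IsShellingOrder.append {m n : ℕ} {F : Fin m → Finset V} {L : Fin n → Finset V} {x : V}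
    (hF : IsShellingOrder F) (hL : IsShellingOrder L) (hxF : ∀ i, x ∉ F i) (hxL : ∀ j, x ∉ L j)
    (hLF : ∀ j, ∃ l, L j ⊆ F l) : IsShellingOrder (Fin.append F fun j => insert x (L j)) := by
  intro i j hij
  induction j using Fin.addCases with
  | left j =>
    induction i using Fin.addCases with
    | left i =>
      obtain ⟨v, hv, l, hlj, hl⟩ := hF i j (by simpa only [Fin.lt_def, Fin.val_castAdd] using hij)
      exact ⟨v, by simpa only [Fin.append_left] using hv, Fin.castAdd n l,
        by simpa only [Fin.lt_def, Fin.val_castAdd] using hlj,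
        by simpa only [Fin.append_left] using hl⟩
    | right i => rw [Fin.lt_def, Fin.val_castAdd, Fin.val_natAdd] at hij; omega
  | right j =>
    induction i using Fin.addCases with
    | left i =>
      obtain ⟨l, hLFl⟩ := hLF j
      refine ⟨x, ?_, Fin.castAdd n l, ?_, ?_⟩
      · simpa only [Fin.append_left, Fin.append_right, mem_sdiff] using
          ⟨mem_insert_self x _, hxF i⟩
      · rw [Fin.lt_def, Fin.val_castAdd, Fin.val_natAdd]; omega
      · simp only [Fin.append_left, Fin.append_right]
        rw [insert_sdiff_of_notMem _ (hxF l), sdiff_eq_empty_iff_subset.2 hLFl]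
        rfl
    | right i =>
      obtain ⟨v, hv, l, hlj, hl⟩ := hL.cone hxL i j ((Fin.natAdd_lt_natAdd_iff m).1 hij)
      exact ⟨v, by simpa only [Fin.append_right] using hv, Fin.natAdd m l,
        (Fin.natAdd_lt_natAdd_iff m).2 hlj, by simpa only [Fin.append_right] using hl⟩

theorem IsSheddingVertex.mem_facets {Δ : Set (Finset V)} {x : V} (hΔ : ∀ A ∈ Δ, ∀ B ⊆ A, B ∈ Δ)
    (hx : IsSheddingVertex Δ x) {A : Finset V} (hA : A ∈ Facets (deletion Δ x)) :
    A ∈ Facets Δ := by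
  refine ⟨hA.1.1, fun B hB hAB => ?_⟩
  by_cases hxB : x ∈ B
  · exact absurd (hΔ B hB _ (insert_subset hxB hAB)) (hx A hA)
  · exact hA.2 B ⟨hB, hxB⟩ hAB

theorem IsShellable.of_isSheddingVertex [Finite V] {Δ : Set (Finset V)} {x : V}
    (hΔ : ∀ A ∈ Δ, ∀ B ⊆ A, B ∈ Δ) (hx : IsSheddingVertex Δ x)
    (hdel : IsShellable (deletion Δ x)) (hlink : IsShellable (link Δ x)) : IsShellable Δ := by
  obtain ⟨m, F, hF, hFinj, hFsurj, hFshell⟩ := hdel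
  obtain ⟨n, L, hL, hLinj, hLsurj, hLshell⟩ := hlink
  have hxF : ∀ i, x ∉ F i := fun i => (hF i).1.2
  have hxL : ∀ j, x ∉ L j := fun j => (hL j).1.1
  have hLF (j : Fin n) : ∃ l, L j ⊆ F l := by
    obtain ⟨E, hE, hLE⟩ := exists_mem_facets_superset
      (show L j ∈ deletion Δ x from ⟨hΔ _ (hL j).1.2 _ (subset_insert x _), hxL j⟩)
    obtain ⟨l, rfl⟩ := hFsurj E hE
    exact ⟨l, hLE⟩
  refine ⟨m + n, Fin.append F fun j => insert x (L j), fun i => ?_, ?_, fun A hA => ?_,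
    IsShellingOrder.append hFshell hLshell hxF hxL hLF⟩
  · induction i using Fin.addCases
    · simpa only [Fin.append_left] using hx.mem_facets hΔ (hF _)
    · simpa only [Fin.append_right] using insert_mem_facets_of_mem_facets_link (hL _)
  · exact Fin.append_injective_iff.2 ⟨hFinj, insert_injective_of_notMem hLinj hxL,
      fun i j h => hxF i (h ▸ mem_insert_self x _)⟩
  · by_cases hxA : x ∈ A
    · obtain ⟨j, hj⟩ := hLsurj _ (erase_mem_facets_link hA hxA)
      exact ⟨Fin.natAdd m j, by simp only [Fin.append_right, hj, insert_erase hxA]⟩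
    · obtain ⟨i, hi⟩ := hFsurj A ⟨⟨hA.1, hxA⟩, fun B hB => hA.2 B hB.1⟩
      exact ⟨Fin.castAdd n i, by simp only [Fin.append_left, hi]⟩

end Shelling

namespace SimpleGraph

variable {V : Type*} {G : SimpleGraph V}

theorem IsClique.subset_of_forall_adj {B K : Finset V} {w : V} (hB : G.IsClique (B : Set V))
    (hwB : w ∈ B) (hwK : w ∈ K) (hw : ∀ u, G.Adj w u → u ∈ K) : B ⊆ K := fun b hb =>
  (em (b = w)).elim (fun h => h ▸ hwK) fun h => hw b (hB hwB hb (Ne.symm h))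

theorem IsAcyclic.exists_adj_forall_adj_eq [Finite V] (hG : G.IsAcyclic) {a b : V}
    (hab : G.Adj a b) : ∃ x y, G.Adj x y ∧ ∀ z, G.Adj x z → z = y := by
  have : Nonempty V := ⟨a⟩
  -- the first vertex of a longest path is a leaf
  obtain ⟨u, v, p, hp, hmax⟩ := Walk.exists_isPath_forall_isPath_length_le_length G
  have hnil : ¬ p.Nil := fun h => by
    have := hmax _ _ hab.toWalk (by simp [hab.ne])
    simp [h.length_eq_zero] at this
  refine ⟨u, p.snd, p.adj_snd hnil, fun w hw => hG.eq_snd_of_adj_start hp hw ?_⟩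
  by_contra hwp
  have := hmax _ _ (p.cons hw.symm) (hp.cons hwp)
  simp at this

theorem exists_leaf_of_isAcyclic_induce [Finite V] {s : Set V} (hs : (G.induce s).IsAcyclic)
    {r : V → V → Prop} (hr_symm : ∀ x y, r x y → r y x)
    (hr : ∀ x y, r x y → x ∈ s ∧ y ∈ s ∧ G.Adj x y) {a b : V} (hab : r a b) :
    ∃ x y, r x y ∧ ∀ z, r x z → z = y := by
  let R : SimpleGraph s :=
    { Adj p q := r p q
      symm := ⟨fun p q => hr_symm p q⟩
      loopless := ⟨fun p hp => (hr p p hp).2.2.ne rfl⟩ }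
  have hR : R.IsAcyclic := hs.anti fun p q hpq => (hr p q hpq).2.2
  obtain ⟨x, y, hxy, hleaf⟩ := hR.exists_adj_forall_adj_eq
    (a := ⟨a, (hr a b hab).1⟩) (b := ⟨b, (hr a b hab).2.1⟩) hab
  exact ⟨x, y, hxy, fun z hz => congrArg Subtype.val
    (hleaf ⟨z, (hr x z hz).2.1⟩ hz)⟩

theorem exists_subset_pair_of_isClique_of_isAcyclic_induce [DecidableEq V] {s : Set V}
    (hs : (G.induce s).IsAcyclic) {B : Finset V} (hB : G.IsClique (B : Set V)) (hBs : ↑B ⊆ s)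
    {a : V} (ha : a ∈ B) : ∃ b ∈ B, B ⊆ {a, b} := by
  by_cases h : ∀ c ∈ B, c = a
  · exact ⟨a, ha, fun c hc => by simp [h c hc]⟩
  simp only [not_forall] at h
  obtain ⟨b, hb, hba⟩ := h
  refine ⟨b, hb, fun c hc => ?_⟩
  by_contra hc'
  simp only [mem_insert, mem_singleton, not_or] at hc'
  refine hs.cliqueFree le_rfl {⟨a, hBs ha⟩, ⟨b, hBs hb⟩, ⟨c, hBs hc⟩} ?_
  simp only [is3Clique_triple_iff, comap_adj, Function.Embedding.subtype_apply]
  exact ⟨hB ha hb (Ne.symm hba), hB ha hc (Ne.symm hc'.1), hB hb hc (Ne.symm hc'.2)⟩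

end SimpleGraph

section CliqueFreeLink

variable {V : Type*} [DecidableEq V] (G : SimpleGraph V) (t : ℕ)

/-- The faces inside `P` of the link of `D` in `CF_t(G)`. -/
def cliqueFreeLink (P D : Finset V) : Set (Finset V) :=
  {A | A ⊆ P ∧ ∀ B ⊆ A ∪ D, ¬ G.IsNClique t B}

variable {G t} {P D : Finset V} {x : V}

theorem cliqueFreeLink_univ_empty [Fintype V] :
    cliqueFreeLink G t univ ∅ = cliqueFreeComplex G t := by
  ext A
  simp [cliqueFreeLink, cliqueFreeComplex]

theorem cliqueFreeLink_mono {A B : Finset V} (hA : A ∈ cliqueFreeLink G t P D) (hBA : B ⊆ A) :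
    B ∈ cliqueFreeLink G t P D :=
  ⟨hBA.trans hA.1, fun C hC => hA.2 C (hC.trans (union_subset_union hBA subset_rfl))⟩

theorem deletion_cliqueFreeLink :
    deletion (cliqueFreeLink G t P D) x = cliqueFreeLink G t (P.erase x) D := by
  ext A
  simp only [deletion, cliqueFreeLink, Set.mem_ofPred_eq, subset_erase]
  tauto

theorem link_cliqueFreeLink (hx : x ∈ P) :
    link (cliqueFreeLink G t P D) x = cliqueFreeLink G t (P.erase x) (insert x D) := by
  ext A
  simp only [link, cliqueFreeLink, Set.mem_ofPred_eq, subset_erase, insert_subset_iff,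
    insert_union, union_insert]
  tauto

theorem isSheddingVertex_cliqueFreeLink
    (h : ∀ A ∈ Facets (cliqueFreeLink G t (P.erase x) D), ∃ B ⊆ insert x A ∪ D, G.IsNClique t B) :
    IsSheddingVertex (cliqueFreeLink G t P D) x := by
  intro A hA hxA
  rw [deletion_cliqueFreeLink] at hA
  obtain ⟨B, hB, hBt⟩ := h A hA
  exact hxA.2 B hB hBt

theorem isConeVertex_cliqueFreeLink (hx : x ∈ P)
    (h : ∀ A ∈ cliqueFreeLink G t P D, ∀ B ⊆ insert x A ∪ D, ¬ G.IsNClique t B) :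
    IsConeVertex (cliqueFreeLink G t P D) x :=
  fun A hA => ⟨insert_subset hx hA.1, h A hA⟩

theorem isShellable_cliqueFreeLink_of_isSheddingVertex [Finite V] (hx : x ∈ P)
    (hshed : IsSheddingVertex (cliqueFreeLink G t P D) x)
    (hdel : IsShellable (cliqueFreeLink G t (P.erase x) D))
    (hlink : IsShellable (cliqueFreeLink G t (P.erase x) (insert x D))) :
    IsShellable (cliqueFreeLink G t P D) :=
  IsShellable.of_isSheddingVertex (fun _ hA _ hBA => cliqueFreeLink_mono hA hBA) hshed
    (by rwa [deletion_cliqueFreeLink]) (by rwa [link_cliqueFreeLink hx])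

theorem isShellable_cliqueFreeLink_of_isConeVertex (hx : x ∈ P)
    (hcone : IsConeVertex (cliqueFreeLink G t P D) x)
    (hlink : IsShellable (cliqueFreeLink G t (P.erase x) (insert x D))) :
    IsShellable (cliqueFreeLink G t P D) :=
  IsShellable.of_isConeVertex hcone (by rwa [link_cliqueFreeLink hx])

theorem isSheddingVertex_of_isClique {K : Finset V} (hK : G.IsClique (K : Set V)) (hxK : x ∈ K)
    (hxD : x ∉ D) (hcard : t ≤ #(K ∩ (P ∪ D)))
    (hK_adj : ∀ u ∈ K ∩ P, u ≠ x → ∀ w, G.Adj u w → w ∈ K) :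
    IsSheddingVertex (cliqueFreeLink G t P D) x := by
  refine isSheddingVertex_cliqueFreeLink fun A ⟨⟨hAP, hA⟩, hAmax⟩ => ?_
  have hxA : x ∉ A := fun h => notMem_erase x P (hAP h)
  set M := K ∩ (insert x A ∪ D)
  suffices hM : t ≤ #M by
    obtain ⟨B, hBM, hB⟩ := exists_subset_card_eq hM
    exact ⟨B, hBM.trans inter_subset_right,
      ⟨hK.subset (by simpa using hBM.trans inter_subset_left), hB⟩⟩
  by_contra! hM
  obtain ⟨w, hw, hwM⟩ := exists_mem_notMem_of_card_lt_card (hM.trans_le hcard)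
  simp only [M, mem_inter, mem_union, mem_insert, not_and, not_or] at hw hwM
  obtain ⟨⟨hwx, hwA⟩, hwD⟩ := hwM hw.1
  have hwP : w ∈ P := hw.2.resolve_right hwD
  -- `w` has no neighbours outside `K`, so adding it to `A` creates at most `#M` clique vertices
  have hwA' : insert w A ∈ cliqueFreeLink G t (P.erase x) D := by
    refine ⟨insert_subset (mem_erase.2 ⟨hwx, hwP⟩) hAP, fun B hB hBt => ?_⟩
    by_cases hwB : w ∈ B
    · have hBK := hBt.1.subset_of_forall_adj hwB hw.1
        (hK_adj w (mem_inter.2 ⟨hw.1, hwP⟩) hwx)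
      have hBM : B ⊆ insert w (M.erase x) := by
        intro b hb
        have hbK := hBK hb
        have hbA := hB hb
        simp only [M, mem_insert, mem_erase, mem_inter, mem_union] at hbA ⊢
        grind
      have hBM_card : #B ≤ #M := calc
        #B ≤ #(M.erase x) + 1 := (card_le_card hBM).trans (card_insert_le _ _)
        _ = #M := card_erase_add_one (by simp [M, hxK])
      exact hM.not_ge (hBt.2 ▸ hBM_card)
    · exact hA B ((subset_insert_iff_of_notMem hwB).1 (insert_union w A D ▸ hB)) hBt
  exact hwA (hAmax _ hwA' (subset_insert w A) ▸ mem_insert_self w A)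

theorem isConeVertex_of_isClique {K : Finset V} (hxP : x ∈ P) (hxK : x ∈ K)
    (hx_adj : ∀ w, G.Adj x w → w ∈ K) (hcard : #(K ∩ (P ∪ D)) < t) :
    IsConeVertex (cliqueFreeLink G t P D) x := by
  refine isConeVertex_cliqueFreeLink hxP fun A ⟨hAP, hA⟩ B hB hBt => ?_
  by_cases hxB : x ∈ B
  · have hBK : B ⊆ K ∩ (P ∪ D) := subset_inter (hBt.1.subset_of_forall_adj hxB hxK hx_adj)
      (hB.trans (union_subset_union (insert_subset hxP hAP) subset_rfl))
    exact absurd ((card_le_card hBK).trans_lt hcard) hBt.2.not_lt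
  · exact hA B ((subset_insert_iff_of_notMem hxB).1 (insert_union x A D ▸ hB)) hBt

end CliqueFreeLink

section Forest

variable {V : Type*} [DecidableEq V] {G : SimpleGraph V} {t : ℕ} {P D : Finset V} {s : Set V}

theorem forall_not_isNClique_insert_of_isAcyclic_induce (hs : (G.induce s).IsAcyclic)
    (hPs : ↑P ⊆ s) (hP : ∀ z ∈ P, ∀ B ⊆ insert z D, ¬ G.IsNClique t B) {x : V} (hxP : x ∈ P)
    {A : Finset V} (hA : A ∈ cliqueFreeLink G t P D)
    (hx : ∀ y ∈ A, G.Adj x y → ∀ B ⊆ insert x (insert y D), ¬ G.IsNClique t B) :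
    ∀ B ⊆ insert x A ∪ D, ¬ G.IsNClique t B := by
  intro B hB hBt
  have hBD : B \ D ⊆ insert x A := fun b hb => by
    have := hB (mem_sdiff.1 hb).1
    simp only [mem_union, mem_sdiff] at this hb
    tauto
  have hxB : x ∈ B \ D := by
    by_contra hxB
    refine hA.2 B (fun b hb => ?_) hBt
    have := hB hb
    simp only [mem_union, mem_insert, mem_sdiff] at this hxB ⊢
    grind
  -- in the forest, `B` meets `P` in at most an edge through `x`
  obtain ⟨y, hy, hBDxy⟩ := SimpleGraph.exists_subset_pair_of_isClique_of_isAcyclic_induce hs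
    (hBt.1.subset (by simp)) (fun b hb => hPs (insert_subset hxP hA.1 (hBD hb))) hxB
  have hBxy : B ⊆ insert x (insert y D) := fun b hb => by
    by_cases hbD : b ∈ D
    · simp [hbD]
    · have := hBDxy (mem_sdiff.2 ⟨hb, hbD⟩)
      simp only [mem_insert, mem_singleton] at this ⊢
      tauto
  by_cases hyx : y = x
  · exact hP x hxP B (by simpa [hyx] using hBxy) hBt
  · have hyA : y ∈ A := (mem_insert.1 (hBD hy)).resolve_left hyx
    exact hx y hyA (hBt.1 (mem_sdiff.1 hxB).1 (mem_sdiff.1 hy).1 (Ne.symm hyx)) B hBxy hBt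

theorem exists_isSheddingVertex_or_isConeVertex_of_isAcyclic_induce [Finite V]
    (hs : (G.induce s).IsAcyclic) (hPs : ↑P ⊆ s) (hP : P.Nonempty) :
    ∃ x ∈ P, IsSheddingVertex (cliqueFreeLink G t P D) x ∨
      IsConeVertex (cliqueFreeLink G t P D) x := by
  by_cases hz : ∃ z ∈ P, ∃ B ⊆ insert z D, G.IsNClique t B
  · obtain ⟨z, hzP, B, hB, hBt⟩ := hz
    refine ⟨z, hzP, .inl (isSheddingVertex_cliqueFreeLink fun A _ => ⟨B, ?_, hBt⟩)⟩
    exact hB.trans (insert_subset_insert z subset_union_right |>.trans (insert_union z A D).ge)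
  simp only [not_exists, not_and] at hz
  let bad x y := x ∈ P ∧ y ∈ P ∧ G.Adj x y ∧ ∃ B ⊆ insert x (insert y D), G.IsNClique t B
  by_cases hbad : ∃ a b, bad a b
  · obtain ⟨a, b, hab⟩ := hbad
    have hbad_symm (x y : V) : bad x y → bad y x := fun ⟨hx, hy, hxy, B, hB, hBt⟩ =>
      ⟨hy, hx, hxy.symm, B, insert_comm x y D ▸ hB, hBt⟩
    obtain ⟨x, y, ⟨hxP, hyP, hxy, B, hB, hBt⟩, hleaf⟩ :=
      SimpleGraph.exists_leaf_of_isAcyclic_induce hs hbad_symm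
        (fun x y h => ⟨hPs h.1, hPs h.2.1, h.2.2.1⟩) hab
    refine ⟨y, hyP, .inl (isSheddingVertex_cliqueFreeLink fun A hA => ⟨B, ?_, hBt⟩)⟩
    -- a facet avoiding `y` contains the leaf `x`, whose only partner is `y`
    have hxA : x ∈ A := by
      by_contra hxA
      have hins : insert x A ∈ cliqueFreeLink G t (P.erase y) D :=
        ⟨insert_subset (mem_erase.2 ⟨hxy.ne, hxP⟩) hA.1.1,
          forall_not_isNClique_insert_of_isAcyclic_induce hs
            ((coe_subset.2 (erase_subset y P)).trans hPs)
            (fun z hzP => hz z (mem_of_mem_erase hzP)) (mem_erase.2 ⟨hxy.ne, hxP⟩) hA.1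
            fun z hzA hxz B hB hBt => (mem_erase.1 (hA.1.1 hzA)).1
              (hleaf z ⟨hxP, mem_of_mem_erase (hA.1.1 hzA), hxz, B, hB, hBt⟩)⟩
      exact hxA (hA.2 _ hins (subset_insert x A) ▸ mem_insert_self x A)
    intro b hb
    have := hB hb
    simp only [mem_insert, mem_union] at this ⊢
    grind
  · obtain ⟨x, hxP⟩ := hP
    refine ⟨x, hxP, .inr (isConeVertex_cliqueFreeLink hxP fun A hA => ?_)⟩
    exact forall_not_isNClique_insert_of_isAcyclic_induce hs hPs hz hxP hA
      fun y hyA hxy B hB hBt => hbad ⟨x, y, hxP, hA.1 hyA, hxy, B, hB, hBt⟩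

end Forest

namespace IsCliqueAttachment

variable {V : Type*} [DecidableEq V] {G : SimpleGraph V} {VH S : Finset V} {K : V → Finset V}
  {t : ℕ} {P D : Finset V}

theorem mem_of_adj (hG : IsCliqueAttachment G VH S K t) {v u w : V} (hv : v ∈ S) (hu : u ∈ K v)
    (huv : u ≠ v) (huw : G.Adj u w) : w ∈ K v :=
  ((hG.adj_new v hv u hu (hG.new_vertices v hv u hu huv) w).1 huw).1

theorem isSheddingVertex (hG : IsCliqueAttachment G VH S K t) (hPD : Disjoint P D) {v : V}
    (hv : v ∈ S) (hvP : v ∈ P) (hKv : K v ⊆ P ∪ D) :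
    IsSheddingVertex (cliqueFreeLink G t P D) v :=
  isSheddingVertex_of_isClique (hG.clique v hv) (hG.mem_self v hv) (disjoint_left.1 hPD hvP)
    (by rw [inter_eq_left.2 hKv]; exact hG.card_ge v hv)
    fun _ hu huv _ huw => hG.mem_of_adj hv (mem_inter.1 hu).1 huv huw

theorem exists_isSheddingVertex_or_isConeVertex [Finite V] (hG : IsCliqueAttachment G VH S K t)
    (hcyc : (G.induce (↑(VH \ S) : Set V)).IsAcyclic) (hPD : Disjoint P D)
    (hSP : ∀ v ∈ S, v ∉ P) (hP : P.Nonempty) :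
    ∃ x ∈ P, IsSheddingVertex (cliqueFreeLink G t P D) x ∨
      IsConeVertex (cliqueFreeLink G t P D) x := by
  by_cases hnew : ∃ v ∈ S, ∃ w ∈ P, w ∈ K v
  · obtain ⟨v, hv, w, hwP, hwK⟩ := hnew
    have hK_adj : ∀ u ∈ K v ∩ P, ∀ z, G.Adj u z → z ∈ K v := fun u hu _ huz =>
      hG.mem_of_adj hv (mem_inter.1 hu).1 (fun h => hSP v hv (h ▸ (mem_inter.1 hu).2)) huz
    refine ⟨w, hwP, ?_⟩
    by_cases hcard : t ≤ #(K v ∩ (P ∪ D))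
    · exact .inl (isSheddingVertex_of_isClique (hG.clique v hv) hwK (disjoint_left.1 hPD hwP)
        hcard fun u hu _ => hK_adj u hu)
    · exact .inr (isConeVertex_of_isClique hwP hwK (hK_adj w (mem_inter.2 ⟨hwK, hwP⟩))
        (not_le.1 hcard))
  · refine exists_isSheddingVertex_or_isConeVertex_of_isAcyclic_induce hcyc (fun p hp => ?_) hP
    rcases hG.cover p with hpH | ⟨v, hv, hpK⟩
    · exact mem_coe.2 (mem_sdiff.2 ⟨hpH, fun hpS => hSP p hpS hp⟩)
    · exact absurd ⟨v, hv, p, hp, hpK⟩ hnew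

theorem isShellable_cliqueFreeLink [Finite V] (hG : IsCliqueAttachment G VH S K t)
    (hcyc : (G.induce (↑(VH \ S) : Set V)).IsAcyclic) (P D : Finset V) (hPD : Disjoint P D)
    (hKP : ∀ v ∈ S, v ∈ P → K v ⊆ P ∪ D) : IsShellable (cliqueFreeLink G t P D) := by
  induction P using Finset.strongInduction generalizing D with
  | H P ih =>
  rcases P.eq_empty_or_nonempty with rfl | hP
  · exact .of_subset_singleton_empty fun A hA => subset_empty.1 hA.1
  have hlink (x : V) (hx : x ∈ P) :
      IsShellable (cliqueFreeLink G t (P.erase x) (insert x D)) := by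
    refine ih _ (erase_ssubset hx) _ (disjoint_insert_right.2 ⟨notMem_erase x P,
      disjoint_of_subset_left (erase_subset x P) hPD⟩) fun v hv hvP => ?_
    rw [union_insert, ← insert_union, insert_erase hx]
    exact hKP v hv (mem_of_mem_erase hvP)
  by_cases hSP : ∃ v ∈ S, v ∈ P
  · obtain ⟨v, hv, hvP⟩ := hSP
    refine isShellable_cliqueFreeLink_of_isSheddingVertex hvP
      (hG.isSheddingVertex hPD hv hvP (hKP v hv hvP))
      (ih _ (erase_ssubset hvP) _ (disjoint_of_subset_left (erase_subset v P) hPD)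
        fun u hu huP b hb => ?_) (hlink v hvP)
    have hbv : b ≠ v := fun h => disjoint_left.1
      (hG.pairwise_disjoint v hv u hu (ne_of_mem_erase huP).symm) (hG.mem_self v hv) (h ▸ hb)
    have := hKP u hu (mem_of_mem_erase huP) hb
    simp only [mem_union, mem_erase] at this ⊢
    tauto
  · simp only [not_exists, not_and] at hSP
    obtain ⟨x, hxP, hx | hx⟩ := hG.exists_isSheddingVertex_or_isConeVertex hcyc hPD hSP hP
    · exact isShellable_cliqueFreeLink_of_isSheddingVertex hxP hx
        (ih _ (erase_ssubset hxP) _ (disjoint_of_subset_left (erase_subset x P) hPD)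
          fun v hv hvP => absurd (mem_of_mem_erase hvP) (hSP v hv)) (hlink x hxP)
    · exact isShellable_cliqueFreeLink_of_isConeVertex hxP hx (hlink x hxP)

end IsCliqueAttachment

theorem statement8_general {V : Type*} [Fintype V] [DecidableEq V]
    (t : ℕ) (G : SimpleGraph V) (VH S : Finset V) (K : V → Finset V)
    (hG : IsCliqueAttachment G VH S K t)
    (hcyclecover : (G.induce (↑(VH \ S) : Set V)).IsAcyclic) :
    IsShellable (cliqueFreeComplex G t) := by
  rw [← cliqueFreeLink_univ_empty]
  exact hG.isShellable_cliqueFreeLink hcyclecover univ ∅ (disjoint_empty_right _) fun _ _ _ => by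
    simp

/-- for `G = Cl(H, S, t)` where `S` is a cycle cover of `H`
(equivalently, the induced subgraph `H ∖ S` is a forest), the complex `CF_t(G)` is
shellable. -/
theorem statement8 {V : Type*} [Fintype V] [DecidableEq V]
    (t : ℕ) (ht : 2 ≤ t) (G : SimpleGraph V) (VH S : Finset V) (K : V → Finset V)
    (hG : IsCliqueAttachment G VH S K t)
    (hcyclecover : (G.induce (↑(VH \ S) : Set V)).IsAcyclic) :
    IsShellable (cliqueFreeComplex G t) :=
  statement8_general t G VH S K hG hcyclecover
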